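/- arXiv:1907.09539 — 3 statements merged into one kernel-verified Lean document; each statement's English description precedes it below -/
import Mathlib

section
/- Let $v_1,\dots,v_d \in \mathbb{R}^d$ and $w_1,\dots,w_d \in \mathbb{R}^n$ with $\min_i \|w_i\| \geq \delta > 0$, $\max_k \prod_{i\neq k}\|w_i\| \leq \alpha$, and $\sum_{i=1}^d \|v_i - w_i\|^2 \leq r^2$. Then $\prod_{i=1}^d \|v_i\| \leq \alpha\, \exp\left(\frac{\sqrt{d}\,r}{\delta}\right) \max_k \|v_k\|$. -/
/-!
Each factor grows by at most a factor `1 + ‖vᵢ - wᵢ‖ / δ ≤ exp (‖vᵢ - wᵢ‖ / δ)` since `‖wᵢ‖ ≥ δ`,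
so dropping one index `k` the remaining product is at most `α · exp (∑ᵢ ‖vᵢ - wᵢ‖ / δ)`, and by
Cauchy–Schwarz `∑ᵢ ‖vᵢ - wᵢ‖ ≤ √d ρ`. The dropped factor `‖v_k‖` is at most `maxₖ ‖v_k‖`.
-/

open Finset Real

lemma sum_le_sqrt_card_mul_of_sum_sq_le {ι : Type*} (s : Finset ι) (f : ι → ℝ) {ρ : ℝ}
    (hρ : 0 ≤ ρ) (h : ∑ i ∈ s, f i ^ 2 ≤ ρ ^ 2) : ∑ i ∈ s, f i ≤ √(#s : ℝ) * ρ :=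
  calc ∑ i ∈ s, f i = ∑ i ∈ s, f i * 1 := by simp only [mul_one]
    _ ≤ √(∑ i ∈ s, f i ^ 2) * √(∑ i ∈ s, (1 : ℝ) ^ 2) := sum_mul_le_sqrt_mul_sqrt s f 1
    _ ≤ √(ρ ^ 2) * √(∑ i ∈ s, (1 : ℝ) ^ 2) := by gcongr
    _ = √(#s : ℝ) * ρ := by simp [sqrt_sq hρ, mul_comm]

section Perturbation

variable {E : Type*} [SeminormedAddCommGroup E] {δ : ℝ}

lemma norm_le_mul_exp_norm_sub_div {v w : E} (hδ : 0 < δ) (hw : δ ≤ ‖w‖) :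
    ‖v‖ ≤ ‖w‖ * exp (‖v - w‖ / δ) := by
  have hrel : ‖v - w‖ ≤ ‖w‖ * (‖v - w‖ / δ) := by
    rw [mul_div_assoc', le_div_iff₀ hδ, mul_comm]
    gcongr
  calc ‖v‖ ≤ ‖w‖ + ‖v - w‖ := norm_le_norm_add_norm_sub' v w
    _ ≤ ‖w‖ * (‖v - w‖ / δ + 1) := by linarith
    _ ≤ ‖w‖ * exp (‖v - w‖ / δ) := by gcongr; exact add_one_le_exp _

lemma prod_norm_le_prod_norm_mul_exp_sum {ι : Type*} (s : Finset ι) (v w : ι → E)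
    (hδ : 0 < δ) (hw : ∀ i ∈ s, δ ≤ ‖w i‖) :
    ∏ i ∈ s, ‖v i‖ ≤ (∏ i ∈ s, ‖w i‖) * exp ((∑ i ∈ s, ‖v i - w i‖) / δ) :=
  calc ∏ i ∈ s, ‖v i‖ ≤ ∏ i ∈ s, ‖w i‖ * exp (‖v i - w i‖ / δ) :=
        prod_le_prod (fun _ _ ↦ norm_nonneg _)
          fun i hi ↦ norm_le_mul_exp_norm_sub_div hδ (hw i hi)
    _ = (∏ i ∈ s, ‖w i‖) * exp ((∑ i ∈ s, ‖v i - w i‖) / δ) := by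
      rw [prod_mul_distrib, sum_div, exp_sum]

lemma prod_norm_le_mul_exp_mul_norm {ι : Type*} [Fintype ι] [DecidableEq ι] (v w : ι → E)
    {α ρ : ℝ} (hδ : 0 < δ) (hw : ∀ i, δ ≤ ‖w i‖) (k : ι)
    (hα : ∏ i ∈ univ.erase k, ‖w i‖ ≤ α) (hρ : 0 ≤ ρ) (hr : ∑ i, ‖v i - w i‖ ^ 2 ≤ ρ ^ 2) :
    ∏ i, ‖v i‖ ≤ α * exp (√(Fintype.card ι) * ρ / δ) * ‖v k‖ := by
  have hsum : ∑ i ∈ univ.erase k, ‖v i - w i‖ ≤ √(Fintype.card ι) * ρ :=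
    calc ∑ i ∈ univ.erase k, ‖v i - w i‖ ≤ ∑ i, ‖v i - w i‖ :=
          sum_le_sum_of_subset_of_nonneg (subset_univ _) fun _ _ _ ↦ norm_nonneg _
      _ ≤ √(Fintype.card ι) * ρ := sum_le_sqrt_card_mul_of_sum_sq_le univ _ hρ hr
  have hα₀ : 0 ≤ α := (prod_nonneg fun _ _ ↦ norm_nonneg _).trans hα
  calc ∏ i, ‖v i‖ = (∏ i ∈ univ.erase k, ‖v i‖) * ‖v k‖ := (prod_erase_mul _ _ (mem_univ k)).symm
    _ ≤ (∏ i ∈ univ.erase k, ‖w i‖) * exp ((∑ i ∈ univ.erase k, ‖v i - w i‖) / δ) * ‖v k‖ := by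
      gcongr
      exact prod_norm_le_prod_norm_mul_exp_sum _ v w hδ fun i _ ↦ hw i
    _ ≤ α * exp (√(Fintype.card ι) * ρ / δ) * ‖v k‖ := by gcongr

end Perturbation

/-- Bound on the full product of the norms of perturbed vectors in terms of
the maximal leave-one-out product `α` of the unperturbed norms:
`∏ᵢ ‖vᵢ‖ ≤ α exp(√d ρ / δ) maxₖ ‖vₖ‖`. -/
theorem product_norm_bound (n d : ℕ) (hd : 0 < d)
    (v w : Fin d → EuclideanSpace ℝ (Fin n)) (δ α ρ : ℝ) (hδ : 0 < δ)
    (hw : ∀ i, δ ≤ ‖w i‖)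
    (hα : ∀ k, ∏ i ∈ univ.erase k, ‖w i‖ ≤ α)
    (hρ : 0 ≤ ρ) (hr : ∑ i, ‖v i - w i‖ ^ 2 ≤ ρ ^ 2) :
    ∏ i, ‖v i‖ ≤
      α * Real.exp (Real.sqrt d * ρ / δ) *
        (univ.sup' (univ_nonempty_iff.mpr ⟨⟨0, hd⟩⟩) fun k => ‖v k‖) := by
  let k : Fin d := ⟨0, hd⟩
  have hα₀ : 0 ≤ α := (prod_nonneg fun _ _ ↦ norm_nonneg _).trans (hα k)
  calc ∏ i, ‖v i‖ ≤ α * exp (√d * ρ / δ) * ‖v k‖ := by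
        simpa only [Fintype.card_fin] using prod_norm_le_mul_exp_mul_norm v w hδ hw k (hα k) hρ hr
    _ ≤ _ := by gcongr; exact le_sup' (fun k ↦ ‖v k‖) (mem_univ k)
end

section
/- Suppose $\vw = (\vw_1,\dots,\vw_d)$ satisfies $\max_k \prod_{i\neq k}\|\vw_i\| \leq \alpha$ and $\min_i \|\vw_i\| \geq \delta > 0$. Then for every $\vv = (\vv_1,\dots,\vv_d)$ with $\sum_{i=1}^d \|\vv_i - \vw_i\|^2 \leq r^2$, the gradient of the Fourier-domain loss $L(\vv) = \frac{1}{2}\|D(\vv)\|^2$ satisfies $\|\nabla L(\vv)\| \leq n^{d/2}\,\|D(\vv)\|\,\|\vx\|\,\alpha\sqrt{d}\,\exp\left(\frac{\sqrt{d}\,r}{\delta}\right)$. -/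
open Matrix Finset

/-- The unitary `n × n` discrete Fourier transform matrix. -/
noncomputable def dftMatrix (n : ℕ) : Matrix (Fin n) (Fin n) ℂ :=
  Matrix.of fun j k =>
    (1 / Real.sqrt n : ℝ) * Complex.exp (2 * Real.pi * Complex.I * j * k / n)

/-- `D(v) = Fᴴy - n^{d/2} (∏ᵢ diag(Fᴴvᵢ)) Fᴴx`, the Fourier-domain residual. -/
noncomputable def Dres (n d : ℕ) (x y : EuclideanSpace ℝ (Fin n))
    (v : PiLp 2 fun _ : Fin d => EuclideanSpace ℝ (Fin n)) : Fin n → ℂ :=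
  ((dftMatrix n)ᴴ *ᵥ fun j => (y j : ℂ)) -
    (((n : ℝ) ^ ((d : ℝ) / 2) : ℝ) : ℂ) •
      ((List.ofFn fun i : Fin d =>
          Matrix.diagonal ((dftMatrix n)ᴴ *ᵥ fun j => (v i j : ℂ))).prod *ᵥ
        ((dftMatrix n)ᴴ *ᵥ fun j => (x j : ℂ)))

/-!
Write `D_j(u) = (Fᴴy)_j - n^{d/2} (Fᴴx)_j ∏ᵢ (Fᴴuᵢ)_j`, so that `L = ½ ∑_j |D_j|²` and
`|dL(v) h| ≤ ∑_j |D_j(v)| |dD_j(v) h|`. By the product rule `dD_j(v) h` is `n^{d/2} (Fᴴx)_j`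
times `∑ᵢ ∏_{k≠i} (Fᴴv_k)_j (Fᴴhᵢ)_j`. Since `F` is unitary, a single Fourier coefficient of a
signal is bounded by the norm of the signal, so the sum is at most
`(maxᵢ ∏_{k≠i} ‖v_k‖) ∑ᵢ ‖hᵢ‖ ≤ α exp(√d ρ / δ) √d ‖h‖`: the first factor because
`‖v_k‖ ≤ ‖w_k‖ exp(‖v_k - w_k‖ / δ)` and `∑_k ‖v_k - w_k‖ ≤ √d ρ`. Finally Cauchy–Schwarz in `j`
and Parseval `‖Fᴴx‖ = ‖x‖` bound `∑_j |D_j(v)| |(Fᴴx)_j|` by `‖D(v)‖ ‖x‖`.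
-/

theorem sum_le_sqrt_card_mul_sqrt_sum_sq {ι : Type*} (s : Finset ι) (f : ι → ℝ) :
    ∑ i ∈ s, f i ≤ √(#s : ℝ) * √(∑ i ∈ s, f i ^ 2) := by
  simpa using Real.sum_mul_le_sqrt_mul_sqrt s 1 f

theorem PiLp.sum_norm_le_sqrt_card_mul_norm {ι : Type*} [Fintype ι] {β : ι → Type*}
    [∀ i, SeminormedAddCommGroup (β i)] (h : PiLp 2 β) :
    ∑ i, ‖h i‖ ≤ √(Fintype.card ι) * ‖h‖ := by
  simpa [PiLp.norm_eq_of_L2] using sum_le_sqrt_card_mul_sqrt_sum_sq univ fun i => ‖h i‖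

theorem le_mul_exp_div_of_le_add {a b t δ : ℝ} (hδ : 0 < δ) (hb : δ ≤ b) (ht : 0 ≤ t)
    (hab : a ≤ b + t) : a ≤ b * Real.exp (t / δ) :=
  calc a ≤ b + t := hab
    _ = b + δ * (t / δ) := by rw [mul_div_cancel₀ t hδ.ne']
    _ ≤ b * (t / δ + 1) := by nlinarith [div_nonneg ht hδ.le]
    _ ≤ b * Real.exp (t / δ) :=
      mul_le_mul_of_nonneg_left (Real.add_one_le_exp _) (hδ.le.trans hb)

theorem prod_le_prod_mul_exp_sum_div {ι : Type*} (s : Finset ι) {a b t : ι → ℝ} {δ : ℝ}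
    (hδ : 0 < δ) (ha : ∀ i ∈ s, 0 ≤ a i) (hb : ∀ i ∈ s, δ ≤ b i) (ht : ∀ i ∈ s, 0 ≤ t i)
    (hab : ∀ i ∈ s, a i ≤ b i + t i) :
    ∏ i ∈ s, a i ≤ (∏ i ∈ s, b i) * Real.exp (∑ i ∈ s, t i / δ) := by
  rw [Real.exp_sum, ← prod_mul_distrib]
  exact prod_le_prod ha fun i hi =>
    le_mul_exp_div_of_le_add hδ (hb i hi) (ht i hi) (hab i hi)

theorem prod_erase_norm_le_of_sum_norm_sub_sq_le {ι E : Type*} [Fintype ι] [DecidableEq ι]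
    [SeminormedAddCommGroup E] {w v : ι → E} {α δ ρ : ℝ} (hδ : 0 < δ) (hρ : 0 ≤ ρ)
    (hδw : ∀ i, δ ≤ ‖w i‖) (hball : ∑ i, ‖v i - w i‖ ^ 2 ≤ ρ ^ 2) (k : ι)
    (hα : ∏ i ∈ univ.erase k, ‖w i‖ ≤ α) :
    ∏ i ∈ univ.erase k, ‖v i‖ ≤ α * Real.exp (√(Fintype.card ι) * ρ / δ) := by
  have hsum : ∑ i ∈ univ.erase k, ‖v i - w i‖ / δ ≤ √(Fintype.card ι) * ρ / δ := by
    rw [← sum_div]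
    refine div_le_div_of_nonneg_right ?_ hδ.le
    calc ∑ i ∈ univ.erase k, ‖v i - w i‖
        ≤ ∑ i, ‖v i - w i‖ :=
          sum_le_sum_of_subset_of_nonneg (subset_univ _) fun _ _ _ => norm_nonneg _
      _ ≤ √(Fintype.card ι) * √(∑ i, ‖v i - w i‖ ^ 2) := sum_le_sqrt_card_mul_sqrt_sum_sq _ _
      _ ≤ √(Fintype.card ι) * ρ := by
        gcongr
        exact Real.sqrt_le_iff.mpr ⟨hρ, hball⟩
  calc ∏ i ∈ univ.erase k, ‖v i‖
      ≤ (∏ i ∈ univ.erase k, ‖w i‖) * Real.exp (∑ i ∈ univ.erase k, ‖v i - w i‖ / δ) :=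
        prod_le_prod_mul_exp_sum_div _ hδ (fun _ _ => norm_nonneg _) (fun i _ => hδw i)
          (fun _ _ => norm_nonneg _) fun i _ => norm_le_norm_add_norm_sub' (v i) (w i)
    _ ≤ α * Real.exp (√(Fintype.card ι) * ρ / δ) := by
      gcongr
      exact (prod_nonneg fun _ _ => norm_nonneg _).trans hα

theorem norm_gradient_half_sum_norm_sq_le {E F J : Type*} [NormedAddCommGroup E]
    [InnerProductSpace ℝ E] [CompleteSpace E] [NormedAddCommGroup F] [InnerProductSpace ℝ F]
    [Fintype J] {D : J → E → F} {D' : J → E →L[ℝ] F} {v : E}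
    (hD : ∀ j, HasFDerivAt (D j) (D' j) v) {C : ℝ} (hC : 0 ≤ C)
    (hbound : ∀ h, ∑ j, ‖D j v‖ * ‖D' j h‖ ≤ C * ‖h‖) :
    ‖gradient (fun u => (1 / 2 : ℝ) * ∑ j, ‖D j u‖ ^ 2) v‖ ≤ C := by
  have hf := (HasFDerivAt.fun_sum (u := univ) fun j _ => (hD j).norm_sq).const_mul (1 / 2 : ℝ)
  rw [gradient, hf.fderiv, LinearIsometryEquiv.norm_map]
  refine ContinuousLinearMap.opNorm_le_bound _ hC fun h => le_trans ?_ (hbound h)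
  simp only [one_div, _root_.smul_apply, _root_.sum_apply,
    ContinuousLinearMap.comp_apply, coe_innerSL_apply, nsmul_eq_mul, Nat.cast_ofNat, smul_eq_mul,
    norm_mul, norm_inv, Real.norm_ofNat, Real.norm_eq_abs]
  rw [← mul_sum, abs_mul, abs_two, inv_mul_cancel_left₀ two_ne_zero]
  exact (abs_sum_le_sum_abs _ _).trans (sum_le_sum fun j _ => abs_real_inner_le_norm _ _)

theorem norm_sum_smul_apply_le {ι E : Type*} [Fintype ι] [SeminormedAddCommGroup E]
    [NormedSpace ℝ E] (c : ι → ℂ) (ℓ : ι → E →L[ℝ] ℂ) (h : E) {B : ℝ} (hc : ∀ i, ‖c i‖ ≤ B) :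
    ‖(∑ i, c i • ℓ i) h‖ ≤ B * ∑ i, ‖ℓ i h‖ := by
  rw [mul_sum, _root_.sum_apply]
  refine (norm_sum_le _ _).trans (sum_le_sum fun i _ => ?_)
  rw [_root_.smul_apply, norm_smul]
  exact mul_le_mul_of_nonneg_right (hc i) (norm_nonneg _)

theorem sum_norm_sq_mulVec_of_mem_unitaryGroup {ι : Type*} [Fintype ι] [DecidableEq ι]
    {U : Matrix ι ι ℂ} (hU : U ∈ unitaryGroup ι ℂ) (u : ι → ℂ) :
    ∑ j, ‖(U *ᵥ u) j‖ ^ 2 = ∑ j, ‖u j‖ ^ 2 := by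
  have key : star (U *ᵥ u) ⬝ᵥ (U *ᵥ u) = star u ⬝ᵥ u := by
    rw [star_mulVec, dotProduct_mulVec, vecMul_vecMul, ← star_eq_conjTranspose,
      (mem_unitaryGroup_iff'.mp hU), vecMul_one]
  have hnormsq : ∀ a : ι → ℂ, star a ⬝ᵥ a = ((∑ j, ‖a j‖ ^ 2 : ℝ) : ℂ) := by
    intro a
    push_cast
    simp only [dotProduct, Pi.star_apply, RCLike.star_def, RCLike.conj_mul]
    rfl
  exact_mod_cast (hnormsq _).symm.trans (key.trans (hnormsq u))

theorem List.prod_ofFn_diagonal {ι R : Type*} [Fintype ι] [DecidableEq ι] [CommSemiring R]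
    {d : ℕ} (g : Fin d → ι → R) :
    (List.ofFn fun i => diagonal (g i)).prod = diagonal (∏ i, g i) := by
  have h := map_list_prod (diagonalRingHom ι R) (List.ofFn g)
  rwa [List.map_ofFn, List.prod_ofFn, eq_comm] at h

theorem geom_sum_eq_zero_of_pow_eq_one {R : Type*} [CommRing R] [IsDomain R] {r : R} {n : ℕ}
    (hr : r ^ n = 1) (hr1 : r ≠ 1) : ∑ j ∈ range n, r ^ j = 0 := by
  have h := mul_neg_geom_sum r n
  rw [hr, sub_self, mul_eq_zero] at h
  exact h.resolve_left (sub_ne_zero.mpr hr1.symm)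

theorem dftMatrix_apply_eq_pow (n : ℕ) (j k : Fin n) :
    dftMatrix n j k =
      ((√n)⁻¹ : ℝ) * Complex.exp (2 * Real.pi * Complex.I / n) ^ (j * k : ℕ) := by
  rw [dftMatrix, of_apply, one_div, ← Complex.exp_nat_mul]
  congr 2
  push_cast
  ring

theorem dftMatrix_mem_unitaryGroup (n : ℕ) : dftMatrix n ∈ unitaryGroup (Fin n) ℂ := by
  rw [mem_unitaryGroup_iff]
  ext m m'
  have hn : n ≠ 0 := m.pos.ne'
  set ζ := Complex.exp (2 * Real.pi * Complex.I / n)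
  have hζ : IsPrimitiveRoot ζ n := Complex.isPrimitiveRoot_exp n hn
  have hstar : star ζ = ζ⁻¹ := by
    rw [Complex.inv_def, Complex.normSq_eq_norm_sq, hζ.norm'_eq_one hn]
    simp
  have hterm : ∀ j : Fin n, dftMatrix n m j * star (dftMatrix n m' j) =
      (n : ℂ)⁻¹ * (ζ ^ (m : ℕ) * ζ⁻¹ ^ (m' : ℕ)) ^ (j : ℕ) := by
    intro j
    rw [dftMatrix_apply_eq_pow, dftMatrix_apply_eq_pow, star_mul', star_pow, hstar,
      Complex.star_def, Complex.conj_ofReal]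
    have hscale : (((√n)⁻¹ : ℝ) : ℂ) * (((√n)⁻¹ : ℝ) : ℂ) = (n : ℂ)⁻¹ := by
      rw [← Complex.ofReal_mul, ← mul_inv, Real.mul_self_sqrt n.cast_nonneg]
      push_cast
      rfl
    rw [mul_pow, ← pow_mul, ← pow_mul, ← hscale]
    ring
  simp only [mul_apply, star_apply, hterm, ← mul_sum, one_apply]
  rw [Fin.sum_univ_eq_sum_range (fun j => (ζ ^ (m : ℕ) * ζ⁻¹ ^ (m' : ℕ)) ^ j)]
  split_ifs with hmm
  · subst hmm
    rw [inv_pow, mul_inv_cancel₀ (pow_ne_zero _ (hζ.ne_zero hn))]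
    simp [hn]
  · refine mul_eq_zero_of_right _ (geom_sum_eq_zero_of_pow_eq_one ?_ ?_)
    · rw [mul_pow, ← pow_mul, ← pow_mul, inv_pow, mul_comm _ n, mul_comm _ n, pow_mul, pow_mul,
        hζ.pow_eq_one]
      simp
    · intro h
      rw [inv_pow, mul_inv_eq_one₀ (pow_ne_zero _ (hζ.ne_zero hn))] at h
      exact hmm (Fin.ext (hζ.pow_inj m.isLt m'.isLt h))

noncomputable def dftCoord (n : ℕ) (j : Fin n) : EuclideanSpace ℝ (Fin n) →L[ℝ] ℂ :=
  LinearMap.toContinuousLinearMap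
    { toFun u := ((dftMatrix n)ᴴ *ᵥ fun m => (u m : ℂ)) j
      map_add' u u' := by
        simp only [PiLp.add_apply, Complex.ofReal_add, ← Pi.add_def, mulVec_add, Pi.add_apply]
      map_smul' r u := by
        simp only [PiLp.smul_apply, smul_eq_mul, Complex.ofReal_mul, RingHom.id_apply]
        rw [show (fun m => (r : ℂ) * (u m : ℂ)) = (r : ℂ) • fun m => (u m : ℂ) from rfl,
          mulVec_smul, Pi.smul_apply, smul_eq_mul, Complex.real_smul] }

theorem dftCoord_apply (n : ℕ) (j : Fin n) (u : EuclideanSpace ℝ (Fin n)) :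
    dftCoord n j u = ((dftMatrix n)ᴴ *ᵥ fun m => (u m : ℂ)) j := rfl

theorem sum_norm_sq_dftCoord (n : ℕ) (u : EuclideanSpace ℝ (Fin n)) :
    ∑ j, ‖dftCoord n j u‖ ^ 2 = ‖u‖ ^ 2 := by
  have hU : (dftMatrix n)ᴴ ∈ unitaryGroup (Fin n) ℂ :=
    Unitary.star_mem (dftMatrix_mem_unitaryGroup n)
  simp only [dftCoord_apply]
  rw [sum_norm_sq_mulVec_of_mem_unitaryGroup hU, EuclideanSpace.norm_sq_eq]
  simp

theorem norm_dftCoord_le (n : ℕ) (j : Fin n) (u : EuclideanSpace ℝ (Fin n)) :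
    ‖dftCoord n j u‖ ≤ ‖u‖ := by
  refine le_of_sq_le_sq ?_ (norm_nonneg u)
  rw [← sum_norm_sq_dftCoord n u]
  exact single_le_sum (f := fun j => ‖dftCoord n j u‖ ^ 2) (fun _ _ => by positivity) (mem_univ j)

theorem Dres_apply (n d : ℕ) (x y : EuclideanSpace ℝ (Fin n))
    (v : PiLp 2 fun _ : Fin d => EuclideanSpace ℝ (Fin n)) (j : Fin n) :
    Dres n d x y v j = dftCoord n j y
      - ((n : ℝ) ^ ((d : ℝ) / 2) : ℝ) * dftCoord n j x * ∏ i, dftCoord n j (v i) := by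
  simp only [Dres, List.prod_ofFn_diagonal, Finset.prod_apply, Pi.sub_apply, Pi.smul_apply,
    smul_eq_mul, mulVec_diagonal, dftCoord_apply]
  ring

noncomputable def dresDeriv (n d : ℕ) (x : EuclideanSpace ℝ (Fin n))
    (v : PiLp 2 fun _ : Fin d => EuclideanSpace ℝ (Fin n)) (j : Fin n) :
    (PiLp 2 fun _ : Fin d => EuclideanSpace ℝ (Fin n)) →L[ℝ] ℂ :=
  -(((((n : ℝ) ^ ((d : ℝ) / 2) : ℝ) : ℂ) * dftCoord n j x) •
    ∑ i, (∏ k ∈ univ.erase i, dftCoord n j (v k)) • (dftCoord n j).comp (PiLp.proj 2 _ i))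

theorem hasFDerivAt_Dres (n d : ℕ) (x y : EuclideanSpace ℝ (Fin n))
    (v : PiLp 2 fun _ : Fin d => EuclideanSpace ℝ (Fin n)) (j : Fin n) :
    HasFDerivAt (fun u => Dres n d x y u j) (dresDeriv n d x v j) v := by
  simp only [Dres_apply, dresDeriv]
  exact ((HasFDerivAt.finsetProd fun i _ =>
    (dftCoord n j).hasFDerivAt.comp v (PiLp.hasFDerivAt_apply 2 v i)).const_mul _).const_sub _

theorem norm_dresDeriv_apply_le (n d : ℕ) (x : EuclideanSpace ℝ (Fin n))
    (v h : PiLp 2 fun _ : Fin d => EuclideanSpace ℝ (Fin n)) (j : Fin n) {B : ℝ} (hB0 : 0 ≤ B)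
    (hB : ∀ i, ∏ k ∈ univ.erase i, ‖v k‖ ≤ B) :
    ‖dresDeriv n d x v j h‖ ≤
      (n : ℝ) ^ ((d : ℝ) / 2) * ‖dftCoord n j x‖ * (B * (√d * ‖h‖)) := by
  have hcoeff : ∀ i, ‖∏ k ∈ univ.erase i, dftCoord n j (v k)‖ ≤ B := fun i =>
    (norm_prod _ _).trans_le <| (prod_le_prod (fun _ _ => norm_nonneg _)
      fun k _ => norm_dftCoord_le n j (v k)).trans (hB i)
  rw [dresDeriv, _root_.neg_apply, norm_neg, _root_.smul_apply, norm_smul, norm_mul,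
    Complex.norm_real, Real.norm_of_nonneg (by positivity)]
  gcongr
  calc _ ≤ B * ∑ i, ‖(dftCoord n j).comp (PiLp.proj 2 _ i) h‖ :=
        norm_sum_smul_apply_le _ _ h hcoeff
    _ ≤ B * ∑ i, ‖h i‖ := by gcongr with i; exact norm_dftCoord_le n j (h i)
    _ ≤ B * (√d * ‖h‖) := by gcongr; simpa using PiLp.sum_norm_le_sqrt_card_mul_norm h

theorem full_gradient_bound_general (n d : ℕ)
    (x y : EuclideanSpace ℝ (Fin n))
    (w v : PiLp 2 fun _ : Fin d => EuclideanSpace ℝ (Fin n))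
    (α δ ρ : ℝ) (hδ : 0 < δ) (hρ : 0 ≤ ρ)
    (hα : ∀ k, ∏ i ∈ univ.erase k, ‖w i‖ ≤ α)
    (hδw : ∀ i, δ ≤ ‖w i‖)
    (hball : ∑ i, ‖v i - w i‖ ^ 2 ≤ ρ ^ 2) :
    ‖gradient (fun u : PiLp 2 fun _ : Fin d => EuclideanSpace ℝ (Fin n) =>
        (1 / 2 : ℝ) * ∑ j, ‖Dres n d x y u j‖ ^ 2) v‖ ≤
      (n : ℝ) ^ ((d : ℝ) / 2) *
        Real.sqrt (∑ j, ‖Dres n d x y v j‖ ^ 2) * ‖x‖ *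
        (α * Real.sqrt d * Real.exp (Real.sqrt d * ρ / δ)) := by
  rcases Nat.eq_zero_or_pos d with rfl | hd
  · simp [Subsingleton.elim (gradient _ v) 0]
  set s := (n : ℝ) ^ ((d : ℝ) / 2)
  set B := α * Real.exp (√d * ρ / δ)
  have hα0 : 0 ≤ α := (prod_nonneg fun _ _ => norm_nonneg _).trans (hα ⟨0, hd⟩)
  have hB0 : 0 ≤ B := by positivity
  have hB : ∀ k, ∏ i ∈ univ.erase k, ‖v i‖ ≤ B := fun k => by
    simpa using prod_erase_norm_le_of_sum_norm_sub_sq_le hδ hρ hδw hball k (hα k)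
  have hDx : ∑ j, ‖Dres n d x y v j‖ * ‖dftCoord n j x‖ ≤
      √(∑ j, ‖Dres n d x y v j‖ ^ 2) * ‖x‖ := by
    simpa [sum_norm_sq_dftCoord] using Real.sum_mul_le_sqrt_mul_sqrt univ
      (fun j => ‖Dres n d x y v j‖) (fun j => ‖dftCoord n j x‖)
  refine norm_gradient_half_sum_norm_sq_le (D := fun j u => Dres n d x y u j)
    (fun j => hasFDerivAt_Dres n d x y v j) (by positivity) fun h => ?_
  calc ∑ j, ‖Dres n d x y v j‖ * ‖dresDeriv n d x v j h‖
      ≤ ∑ j, ‖Dres n d x y v j‖ * (s * ‖dftCoord n j x‖ * (B * (√d * ‖h‖))) := by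
        gcongr with j
        exact norm_dresDeriv_apply_le n d x v h j hB0 hB
    _ = s * (B * (√d * ‖h‖)) * ∑ j, ‖Dres n d x y v j‖ * ‖dftCoord n j x‖ := by
        rw [mul_sum]
        exact sum_congr rfl fun j _ => by ring
    _ ≤ s * (B * (√d * ‖h‖)) * (√(∑ j, ‖Dres n d x y v j‖ ^ 2) * ‖x‖) := by gcongr
    _ = _ := by ring

/-- Lemma 2 of the paper: in a ball of radius `ρ` around an initialization `w`
with `max_k ∏_{i≠k} ‖wᵢ‖ ≤ α` and `minᵢ ‖wᵢ‖ ≥ δ > 0`, the full gradient of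
the Fourier-domain loss `L(v) = ½‖D(v)‖²` satisfies
`‖∇L(v)‖ ≤ n^{d/2} ‖D(v)‖ ‖x‖ α √d exp(√d ρ / δ)`. -/
theorem full_gradient_bound (n d : ℕ) (hn : 0 < n)
    (x y : EuclideanSpace ℝ (Fin n))
    (w v : PiLp 2 fun _ : Fin d => EuclideanSpace ℝ (Fin n))
    (α δ ρ : ℝ) (hδ : 0 < δ) (hρ : 0 ≤ ρ)
    (hα : ∀ k, ∏ i ∈ univ.erase k, ‖w i‖ ≤ α)
    (hδw : ∀ i, δ ≤ ‖w i‖)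
    (hball : ∑ i, ‖v i - w i‖ ^ 2 ≤ ρ ^ 2) :
    ‖gradient (fun u : PiLp 2 fun _ : Fin d => EuclideanSpace ℝ (Fin n) =>
        (1 / 2 : ℝ) * ∑ j, ‖Dres n d x y u j‖ ^ 2) v‖ ≤
      (n : ℝ) ^ ((d : ℝ) / 2) *
        Real.sqrt (∑ j, ‖Dres n d x y v j‖ ^ 2) * ‖x‖ *
        (α * Real.sqrt d * Real.exp (Real.sqrt d * ρ / δ)) :=
  full_gradient_bound_general n d x y w v α δ ρ hδ hρ hα hδw hball
end

section
/- Let $\vx, \vy \in \mathbb{R}^n$, and suppose there is an index $t$ such that $|\vf_t^H \vy| - n^{d/2}|\vf_t^H \vx| \geq \tau > 0$, where $\vf_t$ is the $t$-th column of the unitary DFT. Then for all $\vv = (\vv_1,\dots,\vv_d)$ with $\prod_{i=1}^d \|\vv_i\| \leq n^{-d/2}$, the loss satisfies $L(\vv) = \frac{1}{2}\sum_{j=1}^n \left|\vf_j^H\vy - n^{d/2}\left(\prod_{i=1}^d \vf_j^H\vv_i\right)\vf_j^H\vx\right|^2 \geq \frac{\tau^2}{2}$. -/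
/-!
Each column `fⱼ` of the unitary DFT is a unit vector, so by Cauchy–Schwarz `|fⱼᴴ w| ≤ ‖w‖`.
Hence `n^{d/2} |∏ᵢ fₜᴴ vᵢ| ≤ n^{d/2} ∏ᵢ ‖vᵢ‖ ≤ 1`, and the reverse triangle inequality makes the
`t`-th residual at least `|fₜᴴ y| - n^{d/2} |fₜᴴ x| ≥ τ`; that single term already gives `τ²/2`.
-/

open Matrix Finset

/-- `fⱼᴴ v`: the inner product of the `j`-th column of the unitary DFT matrix
with a complex vector `v`. -/
noncomputable def dftCoeff (n : ℕ) (j : Fin n) (v : Fin n → ℂ) : ℂ :=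
  star (fun k => dftMatrix n k j) ⬝ᵥ v

noncomputable def dftColumn (n : ℕ) (j : Fin n) : EuclideanSpace ℂ (Fin n) :=
  WithLp.toLp 2 fun k => dftMatrix n k j

lemma norm_dftMatrix_apply (n : ℕ) (k j : Fin n) :
    ‖dftMatrix n k j‖ = 1 / Real.sqrt n := by
  have h : (2 * (Real.pi : ℂ) * Complex.I * (k : ℂ) * (j : ℂ) / (n : ℂ)) =
      ((2 * Real.pi * k * j / n : ℝ) : ℂ) * Complex.I := by
    push_cast; ring
  rw [dftMatrix, Matrix.of_apply, norm_mul, h, Complex.norm_exp_ofReal_mul_I,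
    mul_one, Complex.norm_real, Real.norm_eq_abs, abs_of_nonneg (by positivity)]

lemma norm_dftColumn {n : ℕ} (j : Fin n) : ‖dftColumn n j‖ = 1 := by
  have hn : (0 : ℝ) < n := by exact_mod_cast j.pos
  simp only [EuclideanSpace.norm_eq, dftColumn, norm_dftMatrix_apply, sum_const, card_univ,
    Fintype.card_fin, nsmul_eq_mul, div_pow, one_pow, Real.sq_sqrt hn.le]
  rw [mul_one_div_cancel hn.ne', Real.sqrt_one]

lemma dftCoeff_eq_inner (n : ℕ) (j : Fin n) (w : EuclideanSpace ℂ (Fin n)) :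
    dftCoeff n j w = inner ℂ (dftColumn n j) w := by
  rw [EuclideanSpace.inner_eq_star_dotProduct, dotProduct_comm]
  rfl

lemma norm_dftCoeff_le {n : ℕ} (j : Fin n) (w : EuclideanSpace ℂ (Fin n)) :
    ‖dftCoeff n j w‖ ≤ ‖w‖ := by
  rw [dftCoeff_eq_inner]
  simpa [norm_dftColumn] using norm_inner_le_norm (𝕜 := ℂ) (dftColumn n j) w

lemma norm_toLp_ofReal {ι : Type*} [Fintype ι] (w : EuclideanSpace ℝ ι) :
    ‖(WithLp.toLp 2 fun k => (w k : ℂ) : EuclideanSpace ℂ ι)‖ = ‖w‖ := by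
  simp only [EuclideanSpace.norm_eq, Complex.norm_real]

lemma norm_dftCoeff_ofReal_le {n : ℕ} (j : Fin n) (w : EuclideanSpace ℝ (Fin n)) :
    ‖dftCoeff n j fun k => (w k : ℂ)‖ ≤ ‖w‖ :=
  (norm_dftCoeff_le j (WithLp.toLp 2 fun k => (w k : ℂ))).trans_eq (norm_toLp_ofReal w)

lemma norm_prod_dftCoeff_ofReal_le {n d : ℕ} (j : Fin n) (v : Fin d → EuclideanSpace ℝ (Fin n)) :
    ‖∏ i, dftCoeff n j fun k => (v i k : ℂ)‖ ≤ ∏ i, ‖v i‖ := by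
  rw [norm_prod]
  exact prod_le_prod (fun _ _ => norm_nonneg _) fun i _ => norm_dftCoeff_ofReal_le j (v i)

lemma le_norm_sub_mul_mul {a p b : ℂ} {c τ : ℝ} (hc : 0 ≤ c) (hp : ‖p‖ ≤ 1)
    (h : τ ≤ ‖a‖ - c * ‖b‖) : τ ≤ ‖a - (c : ℂ) * p * b‖ := by
  have hcpb : ‖(c : ℂ) * p * b‖ ≤ c * ‖b‖ := by
    rw [norm_mul, norm_mul, Complex.norm_real, Real.norm_of_nonneg hc]
    nlinarith [mul_le_mul_of_nonneg_left hp hc, norm_nonneg b]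
  linarith [norm_sub_norm_le a ((c : ℂ) * p * b)]

lemma sq_le_sum_norm_sq {ι E : Type*} [Fintype ι] [SeminormedAddCommGroup E] {z : ι → E}
    {τ : ℝ} (hτ : 0 ≤ τ) (t : ι) (ht : τ ≤ ‖z t‖) : τ ^ 2 ≤ ∑ j, ‖z j‖ ^ 2 :=
  (pow_le_pow_left₀ hτ ht 2).trans <|
    single_le_sum (f := fun j => ‖z j‖ ^ 2) (fun _ _ => by positivity) (mem_univ t)

theorem loss_bounded_away_from_zero_general (n d : ℕ)
    (x y : EuclideanSpace ℝ (Fin n)) (τ : ℝ) (hτ : 0 < τ) (t : Fin n)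
    (ht : τ ≤ ‖(dftCoeff n t fun k => (y k : ℂ))‖ -
      (n : ℝ) ^ ((d : ℝ) / 2) * ‖(dftCoeff n t fun k => (x k : ℂ))‖)
    (v : Fin d → EuclideanSpace ℝ (Fin n))
    (hv : ∏ i, ‖v i‖ ≤ (n : ℝ) ^ (-(d : ℝ) / 2)) :
    τ ^ 2 / 2 ≤
      (1 / 2 : ℝ) * ∑ j, ‖
        (dftCoeff n j (fun k => (y k : ℂ)) -
          (((n : ℝ) ^ ((d : ℝ) / 2) : ℝ) : ℂ) *
            (∏ i, dftCoeff n j fun k => (v i k : ℂ)) *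
            dftCoeff n j (fun k => (x k : ℂ)))‖ ^ 2 := by
  have hn : (1 : ℝ) ≤ n := by exact_mod_cast t.pos
  have hprod : ‖∏ i, dftCoeff n t fun k => (v i k : ℂ)‖ ≤ 1 :=
    (norm_prod_dftCoeff_ofReal_le t v).trans <| hv.trans <|
      Real.rpow_le_one_of_one_le_of_nonpos hn (by linarith [(d.cast_nonneg : (0 : ℝ) ≤ d)])
  have hterm := le_norm_sub_mul_mul (Real.rpow_nonneg (by linarith) _) hprod ht
  calc τ ^ 2 / 2 = 1 / 2 * τ ^ 2 := by ring
    _ ≤ _ := mul_le_mul_of_nonneg_left (sq_le_sum_norm_sq hτ.le t hterm) (by norm_num)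

/-- If some Fourier coefficient of the target dominates that of the input by
`τ`, then the Fourier-domain loss is at least `τ²/2` whenever the product of
the filter norms is at most `n^{-d/2}`. -/
theorem loss_bounded_away_from_zero (n d : ℕ) (hn : 0 < n)
    (x y : EuclideanSpace ℝ (Fin n)) (τ : ℝ) (hτ : 0 < τ) (t : Fin n)
    (ht : τ ≤ ‖(dftCoeff n t fun k => (y k : ℂ))‖ -
      (n : ℝ) ^ ((d : ℝ) / 2) * ‖(dftCoeff n t fun k => (x k : ℂ))‖)
    (v : Fin d → EuclideanSpace ℝ (Fin n))
    (hv : ∏ i, ‖v i‖ ≤ (n : ℝ) ^ (-(d : ℝ) / 2)) :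
    τ ^ 2 / 2 ≤
      (1 / 2 : ℝ) * ∑ j, ‖
        (dftCoeff n j (fun k => (y k : ℂ)) -
          (((n : ℝ) ^ ((d : ℝ) / 2) : ℝ) : ℂ) *
            (∏ i, dftCoeff n j fun k => (v i k : ℂ)) *
            dftCoeff n j (fun k => (x k : ℂ)))‖ ^ 2 :=
  loss_bounded_away_from_zero_general n d x y τ hτ t ht v hv
end
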